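/- Let φ : G → H be an epimorphism and U ≤ G of finite index with ker(φ) ≤ U', V = φ(U). Then the kernels of the Artin transfers correspond exactly: φ(ker(T_{G,U})) = ker(T_{H,V}). -/

import Mathlib

/-! Since `ker φ ≤ U`, the map `φ` identifies `G ⧸ U` with `H ⧸ V` equivariantly and carries
left transversals of `U` to left transversals of `V`; hence the transfer is natural:
`T_{H,V} ∘ φ = ψ ∘ T_{G,U}` with `ψ : U/U' → V/V'` induced by `φ`. Since `ker φ ≤ U'`, the map
`ψ` is injective, and in a commuting square whose left edge `φ` is surjective and whose right
edge `ψ` is injective, `φ` maps the kernel of the top edge onto the kernel of the bottom edge. -/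

open Subgroup

namespace Abelianization

variable {G H : Type*} [Group G] [Group H]

theorem map_injective_of_surjective {f : G →* H} (hf : Function.Surjective f)
    (hker : f.ker ≤ commutator G) : Function.Injective (map f) := by
  have hcomm : (commutator G).map f = commutator H := by
    rw [map_commutator_eq, f.range_eq_top.mpr hf, commutator_def]
  rw [← MonoidHom.ker_eq_bot_iff]
  change (QuotientGroup.map _ _ f (map_le_iff_le_comap.mp hcomm.le)).ker = ⊥
  rw [QuotientGroup.ker_map, ← hcomm, comap_map_eq, sup_eq_left.mpr hker,
    Subgroup.map_eq_bot_iff, QuotientGroup.ker_mk']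

end Abelianization

namespace Subgroup

variable {G H : Type*} [Group G] [Group H] {φ : G →* H} {U : Subgroup G}

theorem leftRel_map_iff (hU : φ.ker ≤ U) (x y : G) :
    QuotientGroup.leftRel (U.map φ) (φ x) (φ y) ↔ QuotientGroup.leftRel U x y := by
  rw [QuotientGroup.leftRel_apply, QuotientGroup.leftRel_apply, ← map_inv, ← map_mul,
    ← mem_comap, comap_map_eq_self hU]

noncomputable def quotientEquivQuotientMap (hφ : Function.Surjective φ) (hU : φ.ker ≤ U) :
    G ⧸ U ≃ H ⧸ U.map φ :=
  Equiv.ofBijective (Quotient.map' φ fun x y => (leftRel_map_iff hU x y).mpr)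
    ⟨Quotient.ind₂' fun x y h => Quotient.sound' ((leftRel_map_iff hU x y).mp
      (Quotient.exact' h)),
     Quotient.ind' fun h => (hφ h).elim fun g hg => ⟨Quotient.mk'' g, congrArg Quotient.mk'' hg⟩⟩

theorem quotientEquivQuotientMap_mk (hφ : Function.Surjective φ) (hU : φ.ker ≤ U) (g : G) :
    quotientEquivQuotientMap hφ hU (g : G ⧸ U) = (φ g : H ⧸ U.map φ) := rfl

theorem quotientEquivQuotientMap_smul (hφ : Function.Surjective φ) (hU : φ.ker ≤ U) (g : G)
    (q : G ⧸ U) :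
    quotientEquivQuotientMap hφ hU (g • q) = φ g • quotientEquivQuotientMap hφ hU q :=
  Quotient.inductionOn' q fun x => by
    rw [Quotient.mk''_eq_mk, MulAction.Quotient.smul_mk, quotientEquivQuotientMap_mk,
      quotientEquivQuotientMap_mk, MulAction.Quotient.smul_mk, smul_eq_mul, smul_eq_mul, map_mul]

theorem LeftTransversal.mk_map_leftQuotientEquiv (hφ : Function.Surjective φ) (hU : φ.ker ≤ U)
    (T : U.LeftTransversal) (q : G ⧸ U) :
    ((φ (T.2.leftQuotientEquiv q) : H) : H ⧸ U.map φ) = quotientEquivQuotientMap hφ hU q :=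
  congrArg (quotientEquivQuotientMap hφ hU) (T.2.quotientGroupMk_leftQuotientEquiv q)

noncomputable def LeftTransversal.map (hφ : Function.Surjective φ) (hU : φ.ker ≤ U)
    (T : U.LeftTransversal) : (U.map φ).LeftTransversal :=
  ⟨Set.range fun q => φ (T.2.leftQuotientEquiv ((quotientEquivQuotientMap hφ hU).symm q)),
    isComplement_range_left fun q => by
      rw [mk_map_leftQuotientEquiv hφ hU, Equiv.apply_symm_apply]⟩

theorem LeftTransversal.map_apply (hφ : Function.Surjective φ) (hU : φ.ker ≤ U)
    (T : U.LeftTransversal) (q : G ⧸ U) :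
    ((map hφ hU T).2.leftQuotientEquiv (quotientEquivQuotientMap hφ hU q) : H) =
      φ (T.2.leftQuotientEquiv q) := by
  rw [map, IsComplement.leftQuotientEquiv_apply, Equiv.symm_apply_apply]
  exact fun q => by rw [mk_map_leftQuotientEquiv hφ hU, Equiv.apply_symm_apply]

theorem LeftTransversal.smul_map_apply (hφ : Function.Surjective φ) (hU : φ.ker ≤ U)
    (T : U.LeftTransversal) (g : G) (q : G ⧸ U) :
    ((φ g • map hφ hU T).2.leftQuotientEquiv (quotientEquivQuotientMap hφ hU q) : H) =
      φ ((g • T).2.leftQuotientEquiv q) := by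
  rw [smul_apply_eq_smul_apply_inv_smul, smul_apply_eq_smul_apply_inv_smul, smul_eq_mul,
    smul_eq_mul, map_mul, ← map_inv, ← quotientEquivQuotientMap_smul, map_apply]

variable {A : Type*} [CommGroup A]

theorem leftTransversals.diff_comp_subgroupMap [U.FiniteIndex] [(U.map φ).FiniteIndex]
    (hφ : Function.Surjective φ) (hU : φ.ker ≤ U) (ϕ : U.map φ →* A)
    {T T' : U.LeftTransversal} {S S' : (U.map φ).LeftTransversal}
    (hS : ∀ q, (S.2.leftQuotientEquiv (quotientEquivQuotientMap hφ hU q) : H) =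
      φ (T.2.leftQuotientEquiv q))
    (hS' : ∀ q, (S'.2.leftQuotientEquiv (quotientEquivQuotientMap hφ hU q) : H) =
      φ (T'.2.leftQuotientEquiv q)) :
    leftTransversals.diff (ϕ.comp (φ.subgroupMap U)) T T' = leftTransversals.diff ϕ S S' := by
  let := U.fintypeQuotientOfFiniteIndex
  let := (U.map φ).fintypeQuotientOfFiniteIndex
  refine Fintype.prod_equiv (quotientEquivQuotientMap hφ hU) _ _ fun q => ?_
  refine congrArg ϕ (Subtype.ext ?_)
  simp only [MonoidHom.subgroupMap_apply_coe, map_mul, map_inv, coe_map, hS, hS']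

end Subgroup

namespace MonoidHom

variable {G H : Type*} [Group G] [Group H] {A B : Type*} [CommGroup A] [CommGroup B]

theorem transfer_comp {U : Subgroup G} [U.FiniteIndex] (f : A →* B) (ϕ : U →* A) :
    transfer (f.comp ϕ) = f.comp (transfer ϕ) := by
  ext g
  let := U.fintypeQuotientOfFiniteIndex
  exact (map_prod f _ _).symm

theorem transfer_comp_subgroupMap {φ : G →* H} (hφ : Function.Surjective φ) {U : Subgroup G}
    (hU : φ.ker ≤ U) [U.FiniteIndex] [(U.map φ).FiniteIndex] (ϕ : U.map φ →* A) :
    transfer (ϕ.comp (φ.subgroupMap U)) = (transfer ϕ).comp φ := by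
  ext g
  let T : U.LeftTransversal := default
  rw [transfer_def _ T, comp_apply, transfer_def _ (T.map hφ hU)]
  exact leftTransversals.diff_comp_subgroupMap hφ hU ϕ (LeftTransversal.map_apply hφ hU T)
    (LeftTransversal.smul_map_apply hφ hU T g)

theorem map_ker_eq_ker_of_comp_eq {φ : G →* H} {ψ : A →* B} {f : G →* A} {f' : H →* B}
    (hφ : Function.Surjective φ) (hψ : Function.Injective ψ) (h : f'.comp φ = ψ.comp f) :
    f.ker.map φ = f'.ker := by
  rw [← ker_comp_of_injective f ψ hψ, ← h, ← comap_ker, map_comap_eq_self_of_surjective hφ]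

end MonoidHom

/-- For an epimorphism `φ : G → H` with `ker(φ) ≤ U'`, `U` of finite index, `V = φ(U)`:
the kernels of the Artin transfers correspond exactly,
`φ(ker T_{G,U}) = ker T_{H,V}`. -/
theorem stmt15 {G H : Type*} [Group G] [Group H] (φ : G →* H)
    (hφ : Function.Surjective φ) (U : Subgroup G) [U.FiniteIndex]
    (hker : φ.ker ≤ (commutator U).map U.subtype) :
    ∀ inst : (U.map φ).FiniteIndex,
      Subgroup.map φ
          (MonoidHom.transfer (Abelianization.of : U →* Abelianization U)).ker =
        (@MonoidHom.transfer H _ (U.map φ) _ _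
          (Abelianization.of : (U.map φ) →* Abelianization (U.map φ)) inst).ker := by
  intro _
  have hU : φ.ker ≤ U := hker.trans (map_subtype_le _)
  have hker' : (φ.subgroupMap U).ker ≤ commutator U := by
    rw [ker_subgroupMap]
    exact (comap_mono hker).trans (comap_map_eq_self_of_injective U.subtype_injective _).le
  refine MonoidHom.map_ker_eq_ker_of_comp_eq hφ
    (Abelianization.map_injective_of_surjective (φ.subgroupMap_surjective U) hker') ?_
  rw [← MonoidHom.transfer_comp_subgroupMap hφ hU, ← MonoidHom.transfer_comp]
  rfl
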